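/- arXiv:1905.09249 — 4 statements merged into one kernel-verified Lean document; each statement's English description precedes it below -/
import Mathlib

section
/- For every real x > 0, the supremum over nonnegative integers k of x^k / k! is at least (1/2) e^{x/2}. -/
open Real

theorem sup_pow_div_factorial_ge (x : ℝ) (hx : 0 < x) :
    (1 / 2) * Real.exp (x / 2) ≤ ⨆ k : ℕ, x ^ k / (Nat.factorial k : ℝ) := by
  set f : ℕ → ℝ := fun k => x ^ k / (Nat.factorial k : ℝ) with hf
  have hbdd : BddAbove (Set.range f) := by
    refine ⟨Real.exp x, ?_⟩
    rintro _ ⟨k, rfl⟩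
    calc f k ≤ ∑ i ∈ Finset.range (k + 1), x ^ i / (Nat.factorial i : ℝ) := by
          refine Finset.single_le_sum (f := fun i => x ^ i / (Nat.factorial i : ℝ)) ?_ ?_
          · intro i _
            positivity
          · simp
      _ ≤ Real.exp x := Real.sum_le_exp_of_nonneg hx.le _
  set S : ℝ := ⨆ k : ℕ, f k with hS
  have hle : ∀ k, f k ≤ S := fun k => le_ciSup hbdd k
  have hexp : Real.exp (x / 2) = ∑' k : ℕ, (x / 2) ^ k / (Nat.factorial k : ℝ) := by
    rw [Real.exp_eq_exp_ℝ, NormedSpace.exp_eq_tsum_div]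
  have hsum1 : Summable (fun k : ℕ => (x / 2) ^ k / (Nat.factorial k : ℝ)) :=
    Real.summable_pow_div_factorial _
  have hsum2 : Summable (fun k : ℕ => S * (1 / 2 : ℝ) ^ k) :=
    (summable_geometric_of_lt_one (by norm_num) (by norm_num)).mul_left S
  have hcmp : ∀ k : ℕ, (x / 2) ^ k / (Nat.factorial k : ℝ) ≤ S * (1 / 2) ^ k := by
    intro k
    have : (x / 2) ^ k / (Nat.factorial k : ℝ) = f k * (1 / 2) ^ k := by
      simp [hf, div_pow, mul_pow]
      ring
    rw [this]
    have h2 : (0:ℝ) ≤ (1 / 2 : ℝ) ^ k := by positivity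
    exact mul_le_mul_of_nonneg_right (hle k) h2
  have htsum : Real.exp (x / 2) ≤ S * 2 := by
    rw [hexp]
    calc (∑' k : ℕ, (x / 2) ^ k / (Nat.factorial k : ℝ))
        ≤ ∑' k : ℕ, S * (1 / 2 : ℝ) ^ k := Summable.tsum_le_tsum hcmp hsum1 hsum2
      _ = S * 2 := by
          rw [tsum_mul_left, tsum_geometric_of_lt_one (by norm_num) (by norm_num)]
          norm_num
  linarith
end

section
/- For every nonnegative integer m and every real x, |d^m/dx^m e^{-x²/2}| ≤ √2 · (2π)^{1/4} · √(m!) · (m+1)^{1/4}. -/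
open Real

open Real MeasureTheory Set Filter FourierTransform Complex

lemma intOn_pow_gauss (n : ℕ) :
    IntegrableOn (fun x : ℝ => x ^ n * Real.exp (-x ^ 2 / 2)) (Ioi 0) := by
  have h := integrableOn_rpow_mul_exp_neg_mul_sq (b := 1/2) (by norm_num)
    (s := (n : ℝ)) (by exact_mod_cast neg_one_lt_zero.trans_le (Nat.cast_nonneg n))
  refine h.congr_fun (fun x hx => ?_) measurableSet_Ioi
  simp only [Real.rpow_natCast]
  ring_nf

lemma tendsto_pow_gauss (n : ℕ) :
    Tendsto (fun x : ℝ => x ^ n * Real.exp (-x ^ 2 / 2)) atTop (nhds 0) := by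
  have h := tendsto_rpow_abs_mul_exp_neg_mul_sq_cocompact (a := 1/2) (by norm_num) (n : ℝ)
  have h2 : Tendsto (fun x : ℝ => |x| ^ (n:ℝ) * Real.exp (-(1/2) * x ^ 2)) atTop (nhds 0) :=
    h.mono_left (by rw [cocompact_eq_atBot_atTop]; exact le_sup_right)
  refine h2.congr' ?_
  filter_upwards [eventually_ge_atTop (0:ℝ)] with x hx
  rw [_root_.abs_of_nonneg hx, Real.rpow_natCast]
  ring_nf

lemma gauss_moment_rec (n : ℕ) :
    ∫ x in Ioi (0:ℝ), x ^ (n+2) * Real.exp (-x ^ 2 / 2)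
      = (n + 1) * ∫ x in Ioi (0:ℝ), x ^ n * Real.exp (-x ^ 2 / 2) := by
  have hderiv : ∀ x ∈ Ioi (0:ℝ), HasDerivAt (fun x : ℝ => x ^ (n+1) * Real.exp (-x ^ 2 / 2))
      ((n+1) * x ^ n * Real.exp (-x ^ 2 / 2) - x ^ (n+2) * Real.exp (-x ^ 2 / 2)) x := by
    intro x _
    have h1 : HasDerivAt (fun x : ℝ => -x ^ 2 / 2) (-x) x := by
      have := ((hasDerivAt_pow 2 x).neg.div_const 2)
      convert! this using 1
      ring
    have h2 := h1.exp
    have h3 := (hasDerivAt_pow (n+1) x).mul h2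
    convert! h3 using 1
    push_cast
    ring
  have hcont : ContinuousWithinAt (fun x : ℝ => x ^ (n+1) * Real.exp (-x ^ 2 / 2)) (Ici 0) 0 :=
    (Continuous.continuousWithinAt (by fun_prop))
  have hint : IntegrableOn (fun x : ℝ =>
      (n+1) * x ^ n * Real.exp (-x ^ 2 / 2) - x ^ (n+2) * Real.exp (-x ^ 2 / 2)) (Ioi 0) := by
    refine IntegrableOn.congr_fun
      (((intOn_pow_gauss n).const_mul ((n:ℝ)+1)).sub (intOn_pow_gauss (n+2)))
      (fun x _ => by simp only [Pi.sub_apply]; ring) measurableSet_Ioi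
  have hkey := integral_Ioi_of_hasDerivAt_of_tendsto hcont hderiv hint (tendsto_pow_gauss (n+1))
  norm_num at hkey
  have hsplit : ∫ x in Ioi (0:ℝ),
      ((n+1) * x ^ n * Real.exp (-x ^ 2 / 2) - x ^ (n+2) * Real.exp (-x ^ 2 / 2))
      = (((n:ℝ)+1) * ∫ x in Ioi (0:ℝ), x ^ n * Real.exp (-x ^ 2 / 2))
        - ∫ x in Ioi (0:ℝ), x ^ (n+2) * Real.exp (-x ^ 2 / 2) := by
    rw [integral_sub (IntegrableOn.congr_fun ((intOn_pow_gauss n).const_mul ((n:ℝ)+1))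
      (fun x _ => by ring) measurableSet_Ioi) (intOn_pow_gauss (n+2)), ← integral_const_mul]
    congr 1
    exact setIntegral_congr_fun measurableSet_Ioi (fun x _ => by ring)
  rw [hsplit] at hkey
  linarith

lemma gauss_moment_nonneg (n : ℕ) : 0 ≤ ∫ x in Ioi (0:ℝ), x ^ n * Real.exp (-x ^ 2 / 2) := by
  refine setIntegral_nonneg measurableSet_Ioi (fun x hx => ?_)
  have : (0:ℝ) ≤ x := le_of_lt hx
  positivity

lemma gauss_moment_bound (n : ℕ) :
    ∫ x in Ioi (0:ℝ), x ^ n * Real.exp (-x ^ 2 / 2)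
      ≤ Real.sqrt (π/2) * Real.sqrt (n.factorial : ℝ) := by
  induction n using Nat.twoStepInduction with
  | zero =>
    have h0 : ∫ x in Ioi (0:ℝ), x ^ 0 * Real.exp (-x ^ 2 / 2)
        = ∫ x in Ioi (0:ℝ), Real.exp (-(1/2) * x ^ 2) := by
      refine setIntegral_congr_fun measurableSet_Ioi (fun x _ => by ring_nf)
    rw [h0, integral_gaussian_Ioi]
    have : π / (1/2 : ℝ) = 4 * (π/2) := by ring
    rw [this, show (4:ℝ) * (π/2) = 2^2 * (π/2) by norm_num, Real.sqrt_mul (by positivity),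
      Real.sqrt_sq (by norm_num : (0:ℝ) ≤ 2)]
    simp
  | one =>
    have h1 : ∫ x in Ioi (0:ℝ), x ^ 1 * Real.exp (-x ^ 2 / 2) = 1 := by
      have hderiv : ∀ x ∈ Ioi (0:ℝ), HasDerivAt (fun x : ℝ => -Real.exp (-x ^ 2 / 2))
          (x ^ 1 * Real.exp (-x ^ 2 / 2)) x := by
        intro x _
        have h1 : HasDerivAt (fun x : ℝ => -x ^ 2 / 2) (-x) x := by
          have := ((hasDerivAt_pow 2 x).neg.div_const 2)
          convert! this using 1
          ring
        have := h1.exp.neg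
        convert! this using 1
        ring
      have hcont : ContinuousWithinAt (fun x : ℝ => -Real.exp (-x ^ 2 / 2)) (Ici 0) 0 :=
        (Continuous.continuousWithinAt (by fun_prop))
      have htend : Tendsto (fun x : ℝ => -Real.exp (-x ^ 2 / 2)) atTop (nhds 0) := by
        have := (tendsto_pow_gauss 0).neg
        simpa using this
      have := integral_Ioi_of_hasDerivAt_of_tendsto hcont hderiv (intOn_pow_gauss 1) htend
      rw [this]
      norm_num
    rw [h1]
    have h2 : (1:ℝ) ≤ Real.sqrt (π/2) := by
      rw [show (1:ℝ) = Real.sqrt 1 by simp]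
      exact Real.sqrt_le_sqrt (by nlinarith [Real.pi_gt_three])
    simpa using h2
  | more k ih _ =>
    rw [gauss_moment_rec k]
    have hstep : ((k:ℝ) + 1) * (Real.sqrt (π/2) * Real.sqrt (k.factorial : ℝ))
        ≤ Real.sqrt (π/2) * Real.sqrt ((k+2).factorial : ℝ) := by
      rw [mul_comm ((k:ℝ)+1) _, mul_assoc]
      refine mul_le_mul_of_nonneg_left ?_ (Real.sqrt_nonneg _)
      rw [mul_comm, show ((k:ℝ)+1) * Real.sqrt (k.factorial : ℝ)
          = Real.sqrt (((k:ℝ)+1)^2 * (k.factorial : ℝ)) by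
        rw [Real.sqrt_mul (by positivity), Real.sqrt_sq (by positivity)]]
      refine Real.sqrt_le_sqrt ?_
      have : ((k+2).factorial : ℝ) = ((k:ℝ)+2) * (((k:ℝ)+1) * (k.factorial : ℝ)) := by
        rw [Nat.factorial_succ, Nat.factorial_succ]
        push_cast
        ring
      rw [this]
      have h1 : (0:ℝ) < (k.factorial : ℝ) := by exact_mod_cast Nat.factorial_pos k
      have h2 : (0:ℝ) ≤ (k:ℝ) := Nat.cast_nonneg k
      nlinarith
    calc ((k:ℝ)+1) * ∫ x in Ioi (0:ℝ), x ^ k * Real.exp (-x ^ 2 / 2)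
        ≤ ((k:ℝ)+1) * (Real.sqrt (π/2) * Real.sqrt (k.factorial : ℝ)) := by
          refine mul_le_mul_of_nonneg_left ih (by positivity)
      _ ≤ _ := hstep
open Real MeasureTheory Set Filter FourierTransform Complex

noncomputable def gg : ℝ → ℂ :=
  fun x => (Real.sqrt (2*π) : ℂ) * Complex.exp (-π * ((2*π:ℝ):ℂ) * x ^ 2)

lemma ft_gg : 𝓕 gg = fun t : ℝ => Complex.exp (-(t:ℂ) ^ 2 / 2) := by
  have hb : (0:ℝ) < 2*π := by positivity
  have h := fourier_gaussian_pi (b := ((2*π:ℝ):ℂ)) (by simpa using hb)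
  have hgg : gg = (Real.sqrt (2*π) : ℂ) • (fun x : ℝ => Complex.exp (-π * ((2*π:ℝ):ℂ) * x ^ 2)) :=
    rfl
  have hsmul : 𝓕 gg = (Real.sqrt (2*π) : ℂ) • 𝓕 (fun x : ℝ => Complex.exp (-π * ((2*π:ℝ):ℂ) * x ^ 2)) := by
    rw [hgg]
    exact VectorFourier.fourierIntegral_const_smul _ _ _ _ _
  rw [hsmul, h]
  funext t
  have hc : ((Real.sqrt (2*π) : ℝ) : ℂ) = ((2*π:ℝ):ℂ) ^ (1/2 : ℂ) := by
    rw [Real.sqrt_eq_rpow]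
    rw [Complex.ofReal_cpow hb.le]
    norm_num
  have hcne : ((Real.sqrt (2*π) : ℝ) : ℂ) ≠ 0 := by
    simpa using (Real.sqrt_pos.mpr hb).ne'
  simp only [Pi.smul_apply, smul_eq_mul]
  rw [show (1:ℂ) / ((2*π:ℝ):ℂ) ^ (1/2 : ℂ) * Complex.exp (-π / ((2*π:ℝ):ℂ) * t ^ 2)
      = (((2*π:ℝ):ℂ) ^ (1/2 : ℂ))⁻¹ * Complex.exp (-π / ((2*π:ℝ):ℂ) * t ^ 2) by rw [one_div]]
  rw [← hc, ← mul_assoc, mul_inv_cancel₀ hcne, one_mul]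
  congr 1
  have hπ : ((π:ℝ):ℂ) ≠ 0 := by exact_mod_cast Real.pi_ne_zero
  push_cast
  field_simp

lemma norm_gg (x : ℝ) : ‖gg x‖ = Real.sqrt (2*π) * Real.exp (-(2*π^2) * x ^ 2) := by
  unfold gg
  rw [norm_mul]
  congr 1
  · rw [Complex.norm_real, Real.norm_eq_abs, _root_.abs_of_nonneg (Real.sqrt_nonneg _)]
  · rw [show -(π:ℂ) * ((2*π:ℝ):ℂ) * (x:ℂ) ^ 2 = -(((2*π^2 : ℝ)):ℂ) * (x:ℂ) ^ 2 by push_cast; ring]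
    rw [norm_cexp_neg_mul_sq, Complex.ofReal_re]

lemma int_pow_gg (n : ℕ) : Integrable (fun x : ℝ => x ^ n • gg x) := by
  have hb : (0:ℝ) < 2*π^2 := by positivity
  have hbase := integrable_rpow_mul_exp_neg_mul_sq hb
    (s := (n:ℝ)) (by exact_mod_cast neg_one_lt_zero.trans_le (Nat.cast_nonneg n))
  have hbase' : Integrable (fun x : ℝ => x ^ n * Real.exp (-(2*π^2) * x ^ 2)) := by
    simpa [Real.rpow_natCast] using hbase
  have habs : Integrable (fun x : ℝ => Real.sqrt (2*π) *
      |x ^ n * Real.exp (-(2*π^2) * x ^ 2)|) := hbase'.abs.const_mul _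
  refine habs.mono' ?_ ?_
  · refine Continuous.aestronglyMeasurable ?_
    unfold gg
    fun_prop
  · refine Eventually.of_forall (fun x => ?_)
    rw [norm_smul, Real.norm_eq_abs, norm_gg, abs_mul,
      _root_.abs_of_pos (Real.exp_pos _)]
    exact le_of_eq (by ring)

lemma iter_ft (m : ℕ) :
    iteratedDeriv m (𝓕 gg) = 𝓕 (fun x : ℝ => (-2*π*Complex.I*x) ^ m • gg x) :=
  Real.iteratedDeriv_fourier (N := (m:ℕ∞)) (fun n _ => int_pow_gg n) le_rfl

lemma iteratedDeriv_ofReal (f : ℝ → ℝ) (hf : ContDiff ℝ (⊤ : ℕ∞) f) (m : ℕ) (x : ℝ) :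
    iteratedDeriv m (fun t : ℝ => (f t : ℂ)) x = ((iteratedDeriv m f x : ℝ) : ℂ) := by
  have h : (fun t : ℝ => (f t : ℂ)) = Complex.ofRealCLM ∘ f := rfl
  rw [h, iteratedDeriv_eq_iteratedFDeriv, iteratedDeriv_eq_iteratedFDeriv,
    ContinuousLinearMap.iteratedFDeriv_comp_left _ hf.contDiffAt (by exact_mod_cast le_top)]
  simp

lemma norm_integrand (m : ℕ) (t : ℝ) :
    ‖(-2*π*Complex.I*t) ^ m • gg t‖
      = |2*π*t| ^ m * (Real.sqrt (2*π) * Real.exp (-(2*π*t) ^ 2 / 2)) := by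
  rw [smul_eq_mul, norm_mul, norm_pow, norm_gg]
  have h1 : ‖-2*(π:ℂ)*Complex.I*(t:ℝ)‖ = 2*π*|t| := by
    simp [norm_mul, _root_.abs_of_pos Real.pi_pos]
  rw [h1]
  have h2 : |2*π*t| = 2*π*|t| := by
    rw [abs_mul, _root_.abs_of_pos (by positivity : (0:ℝ) < 2*π)]
  rw [h2]
  congr 3
  ring

lemma integral_norm_bound (m : ℕ) :
    ∫ t : ℝ, ‖(-2*π*Complex.I*t) ^ m • gg t‖ ≤ Real.sqrt (m.factorial : ℝ) := by
  have h2π : (0:ℝ) < 2*π := by positivity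
  set F : ℝ → ℝ := fun u => |u| ^ m * (Real.sqrt (2*π) * Real.exp (-u ^ 2 / 2)) with hF
  have hstep1 : ∫ t : ℝ, ‖(-2*π*Complex.I*t) ^ m • gg t‖ = ∫ t : ℝ, F (2*π*t) := by
    refine integral_congr_ae (Eventually.of_forall (fun t => ?_))
    simpa [hF] using norm_integrand m t
  have hstep2 : ∫ t : ℝ, F (2*π*t) = |(2*π)⁻¹| • ∫ u : ℝ, F u :=
    MeasureTheory.Measure.integral_comp_mul_left F (2*π)
  have hstep3 : ∫ u : ℝ, F u = Real.sqrt (2*π) * ∫ u : ℝ, |u| ^ m * Real.exp (-u ^ 2 / 2) := by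
    rw [← integral_const_mul]
    refine integral_congr_ae (Eventually.of_forall (fun u => ?_))
    simp only [hF]; ring
  have hstep4 : ∫ u : ℝ, |u| ^ m * Real.exp (-u ^ 2 / 2)
      = 2 * ∫ u in Ioi (0:ℝ), u ^ m * Real.exp (-u ^ 2 / 2) := by
    rw [← integral_comp_abs (f := fun r => r ^ m * Real.exp (-r ^ 2 / 2))]
    refine integral_congr_ae (Eventually.of_forall (fun u => ?_))
    simp only [_root_.sq_abs]
  have hJ := gauss_moment_bound m
  have hJ0 := gauss_moment_nonneg m
  rw [hstep1, hstep2, hstep3, hstep4]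
  rw [smul_eq_mul, _root_.abs_of_pos (by positivity : (0:ℝ) < (2*π)⁻¹)]
  have hππ : Real.sqrt (2*π) * Real.sqrt (π/2) = π := by
    rw [← Real.sqrt_mul (by positivity)]
    rw [show 2*π*(π/2) = π^2 by ring, Real.sqrt_sq Real.pi_pos.le]
  calc (2*π)⁻¹ * (Real.sqrt (2*π) * (2 * ∫ u in Ioi (0:ℝ), u ^ m * Real.exp (-u ^ 2 / 2)))
      ≤ (2*π)⁻¹ * (Real.sqrt (2*π) * (2 * (Real.sqrt (π/2) * Real.sqrt (m.factorial : ℝ)))) := by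
        have hs : (0:ℝ) ≤ Real.sqrt (2*π) := Real.sqrt_nonneg _
        gcongr
    _ = Real.sqrt (m.factorial : ℝ) := by
        have h1 : Real.sqrt π * Real.sqrt π = π := Real.mul_self_sqrt Real.pi_pos.le
        field_simp
        linear_combination hππ

theorem iteratedDeriv_gaussian_bound (m : ℕ) (x : ℝ) :
    |iteratedDeriv m (fun t : ℝ => Real.exp (-t ^ 2 / 2)) x| ≤
      Real.sqrt 2 * (2 * Real.pi) ^ ((1 : ℝ) / 4) * Real.sqrt (Nat.factorial m : ℝ) *
        ((m : ℝ) + 1) ^ ((1 : ℝ) / 4) := by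
  have hsm : ContDiff ℝ (⊤ : ℕ∞) (fun t : ℝ => Real.exp (-t ^ 2 / 2)) :=
    Real.contDiff_exp.comp (((contDiff_id.pow 2).neg).div_const 2)
  have hfc : (fun t : ℝ => ((Real.exp (-t ^ 2 / 2) : ℝ) : ℂ)) = 𝓕 gg := by
    rw [ft_gg]
    funext t
    rw [Complex.ofReal_exp]
    congr 1
    push_cast
    ring
  have key : |iteratedDeriv m (fun t : ℝ => Real.exp (-t ^ 2 / 2)) x|
      ≤ Real.sqrt (m.factorial : ℝ) := by
    have h1 := iteratedDeriv_ofReal (fun t : ℝ => Real.exp (-t ^ 2 / 2)) hsm m x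
    calc |iteratedDeriv m (fun t : ℝ => Real.exp (-t ^ 2 / 2)) x|
        = ‖iteratedDeriv m (fun t : ℝ => ((Real.exp (-t ^ 2 / 2) : ℝ) : ℂ)) x‖ := by
          rw [h1, Complex.norm_real, Real.norm_eq_abs]
      _ = ‖iteratedDeriv m (𝓕 gg) x‖ := by rw [hfc]
      _ = ‖𝓕 (fun t : ℝ => (-2*π*Complex.I*t) ^ m • gg t) x‖ := by rw [iter_ft]
      _ ≤ ∫ t : ℝ, ‖(-2*π*Complex.I*t) ^ m • gg t‖ :=
          VectorFourier.norm_fourierIntegral_le_integral_norm _ _ _ _ _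
      _ ≤ Real.sqrt (m.factorial : ℝ) := integral_norm_bound m
  have ha : 1 ≤ Real.sqrt 2 := by
    rw [show (1:ℝ) = Real.sqrt 1 by simp]
    exact Real.sqrt_le_sqrt one_le_two
  have hb : 1 ≤ (2 * π) ^ ((1:ℝ)/4) :=
    Real.one_le_rpow (by nlinarith [Real.pi_gt_three]) (by norm_num)
  have hc : 1 ≤ ((m:ℝ) + 1) ^ ((1:ℝ)/4) :=
    Real.one_le_rpow (by linarith [Nat.cast_nonneg (α := ℝ) m]) (by norm_num)
  have hs : (0:ℝ) ≤ Real.sqrt (m.factorial : ℝ) := Real.sqrt_nonneg _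
  calc |iteratedDeriv m (fun t : ℝ => Real.exp (-t ^ 2 / 2)) x|
      ≤ Real.sqrt (m.factorial : ℝ) := key
    _ = 1 * 1 * Real.sqrt (m.factorial : ℝ) * 1 := by ring
    _ ≤ Real.sqrt 2 * (2 * π) ^ ((1:ℝ)/4) * Real.sqrt (m.factorial : ℝ) * ((m:ℝ) + 1) ^ ((1:ℝ)/4) := by
        gcongr
end

section
/- There exists a constant C > 0 such that for every multi-index α ∈ ℕⁿ and every x ∈ ℝⁿ, |∂_x^α e^{-2π|x|²}| ≤ C^{1+|α|} (α!)^{1/2}. -/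
open Real

/-- Partial derivative in the `i`-th coordinate direction. -/
noncomputable def pderiv' {n : ℕ} (i : Fin n) (f : (Fin n → ℝ) → ℝ) : (Fin n → ℝ) → ℝ :=
  fun x => fderiv ℝ f x (Pi.single i 1)

/-- Iterated mixed partial derivative along a list of coordinate directions; the
multi-index `α` corresponds to the multiplicities `l.count i`. -/
noncomputable def pderivList {n : ℕ} : List (Fin n) → ((Fin n → ℝ) → ℝ) → ((Fin n → ℝ) → ℝ)
  | [], f => f
  | i :: l, f => pderiv' i (pderivList l f)

section Aux
open Nat

/-- The complex Gaussian. -/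
noncomputable def Gc : ℂ → ℂ := fun z => Complex.exp ((-2 * Real.pi : ℝ) * z ^ 2)

/-- The real Gaussian. -/
noncomputable def gr : ℝ → ℝ := fun t => Real.exp (-2 * Real.pi * t ^ 2)

lemma contDiff_Gc : ContDiff ℂ ⊤ Gc :=
  Complex.contDiff_exp.comp (contDiff_const.mul (contDiff_id.pow 2))

lemma contDiff_gr : ContDiff ℝ (⊤ : ℕ∞) gr :=
  Real.contDiff_exp.comp (contDiff_const.mul (contDiff_id.pow 2))

lemma diff_iter_Gc (k : ℕ) : Differentiable ℂ (iteratedDeriv k Gc) :=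
  contDiff_Gc.differentiable_iteratedDeriv k (by exact_mod_cast WithTop.coe_lt_top (k : ℕ∞))

lemma diff_iter_gr (k : ℕ) : Differentiable ℝ (iteratedDeriv k gr) :=
  contDiff_gr.differentiable_iteratedDeriv k (by exact_mod_cast ENat.coe_lt_top k)

lemma iter_gr_eq (k : ℕ) (x : ℝ) : iteratedDeriv k gr x = (iteratedDeriv k Gc x).re := by
  induction k generalizing x with
  | zero =>
      simp only [iteratedDeriv_zero, gr, Gc]
      rw [show ((-2 * Real.pi : ℝ) : ℂ) * (x : ℂ) ^ 2 = ((-2 * Real.pi * x ^ 2 : ℝ) : ℂ) by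
        push_cast; ring, ← Complex.ofReal_exp, Complex.ofReal_re]
  | succ k ih =>
      rw [iteratedDeriv_succ, iteratedDeriv_succ]
      have h1 : deriv (iteratedDeriv k gr) x
          = deriv (fun y : ℝ => (iteratedDeriv k Gc y).re) x := by
        congr 1; funext y; exact ih y
      rw [h1]
      exact (((diff_iter_Gc k _).hasDerivAt).real_of_complex).deriv

lemma Gc_circle_bound (x R : ℝ) (θ : ℝ) :
    ‖Gc (circleMap x R θ)‖ ≤ Real.exp (4 * Real.pi * R ^ 2) := by
  have hz : circleMap (x : ℂ) R θ = (x : ℂ) + circleMap 0 R θ := by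
    simp [circleMap]
  set w : ℂ := circleMap 0 R θ with hw
  have habs : w.re ^ 2 + w.im ^ 2 = R ^ 2 := by
    have h1 := Complex.sq_norm w
    rw [Complex.normSq_apply, norm_circleMap_zero R θ] at h1
    nlinarith [sq_abs R]
  rw [hz, Gc]
  rw [show ‖Complex.exp (((-2 * Real.pi : ℝ) : ℂ) * ((x : ℂ) + w) ^ 2)‖
      = Real.exp ((((-2 * Real.pi : ℝ) : ℂ) * ((x : ℂ) + w) ^ 2).re) from Complex.norm_exp _]
  apply Real.exp_le_exp.2
  have hre : ((((-2 * Real.pi : ℝ) : ℂ) * ((x : ℂ) + w) ^ 2).re)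
      = -2 * Real.pi * ((x + w.re) ^ 2 - w.im ^ 2) := by
    simp only [pow_two, Complex.mul_re, Complex.add_re, Complex.add_im, Complex.ofReal_re,
      Complex.ofReal_im, Complex.mul_im]
    ring
  rw [hre]
  nlinarith [Real.pi_pos, sq_nonneg (x + w.re)]

lemma iter_Gc_bound (k : ℕ) (x : ℝ) (R : ℝ) (hR : 0 < R) :
    ‖iteratedDeriv k Gc x‖ ≤ (k ! : ℝ) * Real.exp (4 * Real.pi * R ^ 2) / R ^ k := by
  set M : ℝ := Real.exp (4 * Real.pi * R ^ 2) with hM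
  set R' : NNReal := ⟨R, hR.le⟩ with hR'
  have hR'0 : 0 < R' := by exact_mod_cast hR
  have hd : Differentiable ℂ Gc := contDiff_Gc.differentiable (by simp)
  have hps := hd.hasFPowerSeriesOnBall (x : ℂ) hR'0
  set p := cauchyPowerSeries Gc x R' with hp
  have h1 : iteratedDeriv k Gc (x : ℂ) = (k ! : ℕ) • (p k fun _ => (1 : ℂ)) := by
    rw [iteratedDeriv_eq_iteratedFDeriv, ← hps.factorial_smul (1 : ℂ) k]
  -- integral bound
  have hInt : (∫ θ : ℝ in (0)..(2 * Real.pi), ‖Gc (circleMap x R' θ)‖) ≤ 2 * Real.pi * M := by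
    have hb := intervalIntegral.norm_integral_le_of_norm_le_const
      (C := M) (f := fun θ : ℝ => ‖Gc (circleMap x R' θ)‖) (a := 0) (b := 2 * Real.pi)
      (fun θ _ => by
        rw [Real.norm_eq_abs, abs_of_nonneg (norm_nonneg _)]
        exact Gc_circle_bound x R θ)
    calc (∫ θ : ℝ in (0)..(2 * Real.pi), ‖Gc (circleMap x R' θ)‖)
        ≤ ‖∫ θ : ℝ in (0)..(2 * Real.pi), ‖Gc (circleMap x R' θ)‖‖ := le_abs_self _
      _ ≤ M * |2 * Real.pi - 0| := hb
      _ = 2 * Real.pi * M := by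
          rw [sub_zero, abs_of_pos Real.two_pi_pos]; ring
  have hpk : ‖p k‖ ≤ M * R⁻¹ ^ k := by
    refine (norm_cauchyPowerSeries_le Gc x R' k).trans ?_
    have hRabs : |(R' : ℝ)| = R := by rw [hR']; exact abs_of_pos hR
    rw [hRabs]
    gcongr
    calc (2 * Real.pi)⁻¹ * ∫ θ : ℝ in (0)..(2 * Real.pi), ‖Gc (circleMap x R' θ)‖
        ≤ (2 * Real.pi)⁻¹ * (2 * Real.pi * M) := by
          have h0 : (0:ℝ) ≤ (2 * Real.pi)⁻¹ := inv_nonneg.2 Real.two_pi_pos.le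
          exact mul_le_mul_of_nonneg_left hInt h0
      _ = M := by field_simp
  have h2 : ‖iteratedDeriv k Gc (x : ℂ)‖ ≤ (k ! : ℝ) * ‖p k‖ := by
    rw [h1, nsmul_eq_mul, norm_mul, Complex.norm_natCast]
    gcongr
    calc ‖p k fun _ => (1 : ℂ)‖ ≤ ‖p k‖ * ∏ _i : Fin k, ‖(1 : ℂ)‖ :=
          (p k).le_opNorm _
      _ = ‖p k‖ := by simp
  calc ‖iteratedDeriv k Gc (x : ℂ)‖ ≤ (k ! : ℝ) * ‖p k‖ := h2
    _ ≤ (k ! : ℝ) * (M * R⁻¹ ^ k) := by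
        exact mul_le_mul_of_nonneg_left hpk (Nat.cast_nonneg _)
    _ = (k ! : ℝ) * M / R ^ k := by rw [inv_pow]; ring

lemma oneD_bound (k : ℕ) (x : ℝ) :
    |iteratedDeriv k gr x| ≤ Real.exp (4 * Real.pi) ^ (1 + k) * Real.sqrt (k !) := by
  have hexp1 : (1 : ℝ) ≤ Real.exp (4 * Real.pi) := by
    rw [← Real.exp_zero]; exact Real.exp_le_exp.2 (by positivity)
  rcases Nat.eq_zero_or_pos k with rfl | hk
  · simp only [iteratedDeriv_zero, gr, factorial_zero, Nat.cast_one, Real.sqrt_one, mul_one]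
    rw [abs_of_pos (Real.exp_pos _)]
    calc Real.exp (-2 * Real.pi * x ^ 2) ≤ 1 := by
          rw [← Real.exp_zero]; apply Real.exp_le_exp.2; nlinarith [Real.pi_pos, sq_nonneg x]
      _ ≤ Real.exp (4 * Real.pi) ^ (1 + 0) := by simpa using hexp1
  · have hkR : (0 : ℝ) < Real.sqrt k := Real.sqrt_pos.2 (by exact_mod_cast hk)
    have hb := iter_Gc_bound k x (Real.sqrt k) hkR
    rw [Real.sq_sqrt (by positivity : (0:ℝ) ≤ (k:ℝ))] at hb
    have key : (k ! : ℝ) / (Real.sqrt k) ^ k ≤ Real.sqrt (k !) := by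
      rw [div_le_iff₀ (by positivity)]
      have h1 : ((k ! : ℝ)) ^ 2 ≤ (k ! : ℝ) * (k : ℝ) ^ k := by
        have := Nat.factorial_le_pow k
        have h2 : (k ! : ℝ) ≤ (k : ℝ) ^ k := by exact_mod_cast this
        nlinarith [Nat.cast_nonneg (α := ℝ) (k !)]
      have h3 : (Real.sqrt (k !) * Real.sqrt k ^ k) ^ 2 = (k ! : ℝ) * (k:ℝ) ^ k := by
        rw [mul_pow, Real.sq_sqrt (by positivity), ← pow_mul, mul_comm k 2, pow_mul,
          Real.sq_sqrt (by positivity)]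
      have h4 : (k ! : ℝ) ≤ Real.sqrt ((Real.sqrt (k !) * Real.sqrt k ^ k) ^ 2) := by
        rw [h3]
        calc (k ! : ℝ) = Real.sqrt ((k ! : ℝ) ^ 2) := (Real.sqrt_sq (by positivity)).symm
          _ ≤ Real.sqrt ((k ! : ℝ) * (k:ℝ) ^ k) := Real.sqrt_le_sqrt h1
      rwa [Real.sqrt_sq (by positivity)] at h4
    calc |iteratedDeriv k gr x|
        = |(iteratedDeriv k Gc (x:ℂ)).re| := by rw [iter_gr_eq]
      _ ≤ ‖iteratedDeriv k Gc (x : ℂ)‖ := Complex.abs_re_le_norm _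
      _ ≤ (k ! : ℝ) * Real.exp (4 * Real.pi * k) / (Real.sqrt k) ^ k := hb
      _ = ((k ! : ℝ) / (Real.sqrt k) ^ k) * Real.exp (4 * Real.pi) ^ k := by
          rw [← Real.exp_nat_mul]; ring_nf
      _ ≤ Real.sqrt (k !) * Real.exp (4 * Real.pi) ^ k := by
          exact mul_le_mul_of_nonneg_right key (by positivity)
      _ ≤ Real.exp (4 * Real.pi) ^ (1 + k) * Real.sqrt (k !) := by
          rw [mul_comm]
          exact mul_le_mul_of_nonneg_right (pow_le_pow_right₀ hexp1 (Nat.le_add_left k 1))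
            (Real.sqrt_nonneg _)

lemma pderivList_prod {n : ℕ} (l : List (Fin n)) :
    pderivList l (fun y : Fin n → ℝ => ∏ i, gr (y i)) =
      fun y : Fin n → ℝ => ∏ i, iteratedDeriv (l.count i) gr (y i) := by
  induction l with
  | nil => simp [pderivList, iteratedDeriv_zero]
  | cons i l ih =>
      rw [pderivList, ih]
      funext x
      rw [pderiv']
      have hfd : HasFDerivAt (fun y : Fin n → ℝ => ∏ j, iteratedDeriv (l.count j) gr (y j))
          (∑ j : Fin n, (∏ m ∈ Finset.univ.erase j, iteratedDeriv (l.count m) gr (x m)) •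
            ((1 : ℝ →L[ℝ] ℝ).smulRight (deriv (iteratedDeriv (l.count j) gr) (x j))).comp
              (ContinuousLinearMap.proj j)) x := by
        apply HasFDerivAt.finset_prod
        intro j _
        have hd : HasDerivAt (iteratedDeriv (l.count j) gr)
            (deriv (iteratedDeriv (l.count j) gr) (x j)) (x j) :=
          ((diff_iter_gr _) (x j)).hasDerivAt
        exact hd.hasFDerivAt.comp x (hasFDerivAt_apply (𝕜 := ℝ) (F' := fun _ : Fin n => ℝ) j x)
      rw [hfd.fderiv]
      simp only [ContinuousLinearMap.sum_apply, ContinuousLinearMap.smul_apply,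
        ContinuousLinearMap.comp_apply, ContinuousLinearMap.proj_apply,
        ContinuousLinearMap.smulRight_apply, ContinuousLinearMap.one_apply, smul_eq_mul]
      rw [Finset.sum_eq_single i]
      · rw [Pi.single_eq_same]
        have hcount : ∀ j : Fin n, (i :: l).count j = l.count j + if i = j then 1 else 0 := by
          intro j; simp [List.count_cons]
        rw [← Finset.prod_erase_mul Finset.univ _ (Finset.mem_univ i)]
        have h1 : ∀ m ∈ Finset.univ.erase i,
            iteratedDeriv ((i :: l).count m) gr (x m) = iteratedDeriv (l.count m) gr (x m) := by
          intro m hm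
          rw [hcount m, if_neg (Finset.ne_of_mem_erase hm).symm.elim, add_zero]
        rw [Finset.prod_congr rfl h1, hcount i, if_pos rfl, iteratedDeriv_succ]
        ring
      · intro j _ hj
        rw [Pi.single_eq_of_ne hj, zero_mul, mul_zero]
      · intro h; exact absurd (Finset.mem_univ i) h

lemma sum_count_eq_length {n : ℕ} (l : List (Fin n)) : ∑ i, l.count i = l.length := by
  induction l with
  | nil => simp
  | cons i l ih =>
      simp only [List.count_cons, List.length_cons, Finset.sum_add_distrib, ih]
      congr 1
      simp

end Aux

theorem gaussian_mixed_partials_bound (n : ℕ) :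
    ∃ C > (0 : ℝ), ∀ (l : List (Fin n)) (x : Fin n → ℝ),
      |pderivList l (fun y : Fin n → ℝ => Real.exp (-2 * Real.pi * ∑ i, y i ^ 2)) x| ≤
        C ^ (1 + l.length) * (∏ i, (Nat.factorial (l.count i) : ℝ)) ^ ((1 : ℝ) / 2) := by
  set E : ℝ := Real.exp (4 * Real.pi) with hE
  have hE1 : (1 : ℝ) ≤ E := by
    rw [hE, ← Real.exp_zero]; exact Real.exp_le_exp.2 (by positivity)
  refine ⟨E ^ (n + 1), by positivity, ?_⟩
  intro l x
  have hfun : (fun y : Fin n → ℝ => Real.exp (-2 * Real.pi * ∑ i, y i ^ 2))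
      = fun y : Fin n → ℝ => ∏ i, gr (y i) := by
    funext y
    simp only [gr]
    rw [← Real.exp_sum, Finset.mul_sum]
  rw [hfun, pderivList_prod]
  have step1 : |∏ i, iteratedDeriv (l.count i) gr (x i)|
      ≤ ∏ i, (E ^ (1 + l.count i) * Real.sqrt (Nat.factorial (l.count i))) := by
    rw [Finset.abs_prod]
    exact Finset.prod_le_prod (fun i _ => abs_nonneg _) (fun i _ => oneD_bound _ _)
  have step2 : ∏ i, (E ^ (1 + l.count i) * Real.sqrt (Nat.factorial (l.count i)))
      = E ^ (n + l.length) * ∏ i, Real.sqrt (Nat.factorial (l.count i)) := by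
    rw [Finset.prod_mul_distrib, Finset.prod_pow_eq_pow_sum]
    congr 2
    rw [Finset.sum_add_distrib, sum_count_eq_length]
    simp
  have step3 : ∏ i, Real.sqrt (Nat.factorial (l.count i))
      = (∏ i, (Nat.factorial (l.count i) : ℝ)) ^ ((1 : ℝ) / 2) := by
    rw [← Real.finset_prod_rpow _ _ (fun i _ => by positivity) _]
    exact Finset.prod_congr rfl fun i _ => Real.sqrt_eq_rpow _
  have step4 : E ^ (n + l.length) ≤ (E ^ (n + 1)) ^ (1 + l.length) := by
    rw [← pow_mul]
    exact pow_le_pow_right₀ hE1 (by nlinarith [Nat.zero_le (l.length * n)])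
  calc |∏ i, iteratedDeriv (l.count i) gr (x i)|
      ≤ E ^ (n + l.length) * ((∏ i, (Nat.factorial (l.count i) : ℝ)) ^ ((1 : ℝ) / 2)) := by
        rw [← step3, ← step2]; exact step1
    _ ≤ (E ^ (n + 1)) ^ (1 + l.length) * (∏ i, (Nat.factorial (l.count i) : ℝ)) ^ ((1 : ℝ) / 2) := by
        exact mul_le_mul_of_nonneg_right step4 (by positivity)
end

section
/- Let λ > 0 and 0 < μ < 1. Every function u in the Gelfand–Shilov space S(λ,μ)(ℝ) (i.e., smooth with |x^a u^{(b)}(x)| ≤ A^{a+b}(a!)^λ (b!)^μ for some A > 0 and all a, b ∈ ℕ, x ∈ ℝ) extends to an entire function U on ℂ satisfying, for some constant K > 0, e^{φ(x)} |U(x+iy)| ≤ K e^{ψ(y)} for all x, y ∈ ℝ, where φ(x) = (λ/2)|x/A|^{1/λ} and ψ(y) = 2(1-μ)|Ay|^{1/(1-μ)}. -/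
open Real Complex

open Filter Finset in
/-- Single term of the exponential series is at most `exp`. -/
lemma gs_single_le_exp {c : ℝ} (hc : 0 ≤ c) (n : ℕ) :
    c ^ n / (n.factorial : ℝ) ≤ Real.exp c := by
  calc c ^ n / (n.factorial : ℝ)
      ≤ ∑ i ∈ Finset.range (n + 1), c ^ i / (i.factorial : ℝ) := by
        refine Finset.single_le_sum (f := fun i => c ^ i / (i.factorial : ℝ))
          (fun i _ => by positivity) (Finset.self_mem_range_succ n)
    _ ≤ Real.exp c := Real.sum_le_exp_of_nonneg hc _

/-- Key termwise estimate: `q^n / (n!)^ν ≤ (2^(-ν))^n * exp (2ν q^(1/ν))`. -/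
lemma gs_aux_exp_bound (ν q : ℝ) (hν : 0 < ν) (hq : 0 ≤ q) (n : ℕ) :
    q ^ n * (n.factorial : ℝ) ^ (-ν) ≤
      ((2:ℝ) ^ (-ν)) ^ n * Real.exp (2 * ν * q ^ (1/ν)) := by
  have hfac : (0:ℝ) < (n.factorial : ℝ) := by exact_mod_cast n.factorial_pos
  set c : ℝ := q ^ (1/ν) with hcdef
  have hc0 : 0 ≤ c := Real.rpow_nonneg hq _
  have hq' : c ^ ν = q := by
    rw [hcdef, one_div]; exact Real.rpow_inv_rpow hq hν.ne'
  have h1 : (2*c) ^ n ≤ (n.factorial : ℝ) * Real.exp (2*c) := by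
    have h := gs_single_le_exp (by positivity : (0:ℝ) ≤ 2*c) n
    rw [div_le_iff₀ hfac] at h
    calc (2*c)^n ≤ Real.exp (2*c) * (n.factorial:ℝ) := h
      _ = (n.factorial : ℝ) * Real.exp (2*c) := by ring
  have h2 : c ^ n ≤ (n.factorial : ℝ) * Real.exp (2*c) / 2 ^ n := by
    rw [le_div_iff₀ (by positivity)]
    calc c ^ n * 2 ^ n = (2*c) ^ n := by rw [mul_pow]; ring
      _ ≤ _ := h1
  have h3 : q ^ n = (c ^ n) ^ ν := by
    rw [← hq', ← Real.rpow_natCast (c ^ ν) n, ← Real.rpow_mul hc0, mul_comm,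
      Real.rpow_natCast_mul hc0]
  have h4 : (c ^ n) ^ ν ≤ ((n.factorial : ℝ) * Real.exp (2*c) / 2 ^ n) ^ ν :=
    Real.rpow_le_rpow (by positivity) h2 hν.le
  have h5 : ((n.factorial : ℝ) * Real.exp (2*c) / 2 ^ n) ^ ν
      = (n.factorial : ℝ) ^ ν * Real.exp (2*ν*c) / ((2:ℝ) ^ ν) ^ n := by
    rw [Real.div_rpow (by positivity) (by positivity),
      Real.mul_rpow (by positivity) (by positivity)]
    congr 1
    · congr 1
      rw [← Real.exp_mul]; ring_nf
    · rw [← Real.rpow_natCast (2:ℝ) n, ← Real.rpow_mul (by norm_num), mul_comm,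
        Real.rpow_mul_natCast (by norm_num : (0:ℝ) ≤ 2)]
  have h6 : ((2:ℝ) ^ (-ν)) ^ n = (((2:ℝ) ^ ν) ^ n)⁻¹ := by
    rw [Real.rpow_neg (by norm_num), inv_pow]
  have hfn : (0:ℝ) < (n.factorial : ℝ) ^ ν := Real.rpow_pos_of_pos hfac _
  have h2n : (0:ℝ) < ((2:ℝ) ^ ν) ^ n := by positivity
  rw [h3, Real.rpow_neg hfac.le, h6]
  calc (c ^ n) ^ ν * ((n.factorial:ℝ) ^ ν)⁻¹
      ≤ ((n.factorial : ℝ) ^ ν * Real.exp (2*ν*c) / ((2:ℝ) ^ ν) ^ n) *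
          ((n.factorial:ℝ) ^ ν)⁻¹ := by
        rw [← h5]; exact mul_le_mul_of_nonneg_right h4 (by positivity)
    _ = (((2:ℝ) ^ ν) ^ n)⁻¹ * Real.exp (2*ν*c) := by
        field_simp

open Filter in
/-- There is an index where the exponential series nearly attains `exp (s/2)`. -/
lemma gs_aux_max (s : ℝ) (hs : 0 ≤ s) :
    ∃ a : ℕ, Real.exp (s / 2) ≤ 2 * (s ^ a / (a.factorial : ℝ)) := by
  set f : ℕ → ℝ := fun a => s ^ a / (a.factorial : ℝ) with hf
  have hf0 : f 0 = 1 := by simp [hf]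
  have hsum : Summable f := Real.summable_pow_div_factorial s
  have htend : Tendsto f atTop (nhds 0) := hsum.tendsto_atTop_zero
  have hev : ∀ᶠ n in atTop, f n < 1 := htend.eventually_lt_const one_pos
  obtain ⟨N, hN⟩ := hev.exists_forall_of_atTop
  obtain ⟨a, -, hamax⟩ := Finset.exists_max_image (Finset.range (N + 1)) f
    ⟨0, Finset.mem_range.mpr (Nat.succ_pos N)⟩
  have hM : ∀ n, f n ≤ f a := by
    intro n
    rcases le_or_gt n N with h | h
    · exact hamax n (Finset.mem_range.mpr (Nat.lt_succ_of_le h))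
    · have h1 : f n < 1 := hN n h.le
      have h2 : (1:ℝ) ≤ f a := hf0 ▸ hamax 0 (Finset.mem_range.mpr (Nat.succ_pos N))
      linarith
  refine ⟨a, ?_⟩
  have hexp : Real.exp (s / 2) = ∑' n : ℕ, (s/2) ^ n / (n.factorial : ℝ) := by
    rw [Real.exp_eq_exp_ℝ, NormedSpace.exp_eq_tsum_div]
  have hle : ∀ n : ℕ, (s/2) ^ n / (n.factorial : ℝ) ≤ f a * (1/2) ^ n := by
    intro n
    have h1 : (s/2) ^ n / (n.factorial : ℝ) = f n * (1/2) ^ n := by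
      simp only [hf]
      rw [div_pow, div_pow, one_pow]
      ring
    rw [h1]
    exact mul_le_mul_of_nonneg_right (hM n) (by positivity)
  have hsum1 : Summable (fun n : ℕ => (s/2) ^ n / (n.factorial : ℝ)) :=
    Real.summable_pow_div_factorial (s/2)
  have hsum2 : Summable (fun n : ℕ => f a * (1/2 : ℝ) ^ n) :=
    (summable_geometric_of_lt_one (by norm_num) (by norm_num)).mul_left _
  calc Real.exp (s / 2) = ∑' n : ℕ, (s/2) ^ n / (n.factorial : ℝ) := hexp
    _ ≤ ∑' n : ℕ, f a * (1/2 : ℝ) ^ n := hsum1.tsum_le_tsum hle hsum2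
    _ = f a * (1 - 1/2 : ℝ)⁻¹ := by
        rw [tsum_mul_left, tsum_geometric_of_lt_one (by norm_num) (by norm_num)]
    _ = 2 * (s ^ a / (a.factorial : ℝ)) := by norm_num [hf]; ring

lemma gs_iter_within (u : ℝ → ℝ) (hu : ContDiff ℝ (⊤ : ℕ∞) u) {s : Set ℝ} (hs : UniqueDiffOn ℝ s)
    (m : ℕ) {x : ℝ} (hx : x ∈ s) : iteratedDerivWithin m u s x = iteratedDeriv m u x := by
  have hu' : ContDiff ℝ (⊤ : ℕ∞) u := hu.of_le (by simp)
  have h : HasFTaylorSeriesUpToOn (⊤ : ℕ∞) u (ftaylorSeries ℝ u) s :=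
    (contDiff_iff_ftaylorSeries.mp hu').hasFTaylorSeriesUpToOn s
  have h2 := h.eq_iteratedFDerivWithin_of_uniqueDiffOn (m := m) (by exact_mod_cast le_top) hs hx
  rw [iteratedDerivWithin_eq_iteratedFDerivWithin, iteratedDeriv_eq_iteratedFDeriv, ← h2]
  rfl

lemma gs_remainder_right (u : ℝ → ℝ) (hu : ContDiff ℝ (⊤ : ℕ∞) u) (B : ℕ → ℝ)
    (hB : ∀ (b : ℕ) (t : ℝ), |iteratedDeriv b u t| ≤ B b) (x₀ x : ℝ) (hx : x₀ ≤ x) (n : ℕ) :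
    |u x - ∑ k ∈ Finset.range (n + 1),
        ((k.factorial : ℝ)⁻¹ * (x - x₀) ^ k) * iteratedDeriv k u x₀| ≤
      B (n + 1) * |x - x₀| ^ (n + 1) / (n.factorial : ℝ) := by
  rcases eq_or_lt_of_le hx with rfl | hlt
  · have hsum : ∑ k ∈ Finset.range (n + 1),
        ((k.factorial : ℝ)⁻¹ * (x₀ - x₀) ^ k) * iteratedDeriv k u x₀ = u x₀ := by
      rw [Finset.sum_eq_single 0]
      · simp
      · intro k _ hk; simp [sub_self, zero_pow hk]
      · intro h; exact absurd (Finset.mem_range.mpr (Nat.succ_pos n)) h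
    rw [hsum]
    simp
  · have hicc : UniqueDiffOn ℝ (Set.Icc x₀ x) := uniqueDiffOn_Icc hlt
    have hmem : x ∈ Set.Icc x₀ x := Set.right_mem_Icc.mpr hx
    have hx0mem : x₀ ∈ Set.Icc x₀ x := Set.left_mem_Icc.mpr hx
    have hC : ∀ y ∈ Set.Icc x₀ x, ‖iteratedDerivWithin (n + 1) u (Set.Icc x₀ x) y‖ ≤ B (n + 1) := by
      intro y hy
      rw [gs_iter_within u hu hicc (n + 1) hy, Real.norm_eq_abs]
      exact hB _ y
    have hf : ContDiffOn ℝ (n + 1) u (Set.Icc x₀ x) := (hu.of_le (by exact_mod_cast le_top)).contDiffOn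
    have ht := taylor_mean_remainder_bound hx hf hmem hC
    rw [taylor_within_apply] at ht
    simp only [smul_eq_mul] at ht
    have hsum_eq : ∀ k ∈ Finset.range (n + 1),
        ((k.factorial : ℝ)⁻¹ * (x - x₀) ^ k) * iteratedDerivWithin k u (Set.Icc x₀ x) x₀ =
        ((k.factorial : ℝ)⁻¹ * (x - x₀) ^ k) * iteratedDeriv k u x₀ := fun k _ => by
      rw [gs_iter_within u hu hicc k hx0mem]
    rw [Finset.sum_congr rfl hsum_eq, Real.norm_eq_abs] at ht
    calc |u x - ∑ k ∈ Finset.range (n + 1),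
        ((k.factorial : ℝ)⁻¹ * (x - x₀) ^ k) * iteratedDeriv k u x₀|
        ≤ B (n + 1) * (x - x₀) ^ (n + 1) / (n.factorial : ℝ) := ht
      _ = B (n + 1) * |x - x₀| ^ (n + 1) / (n.factorial : ℝ) := by
          rw [_root_.abs_of_nonneg (sub_nonneg.mpr hx)]

lemma gs_remainder (u : ℝ → ℝ) (hu : ContDiff ℝ (⊤ : ℕ∞) u) (B : ℕ → ℝ)
    (hB : ∀ (b : ℕ) (t : ℝ), |iteratedDeriv b u t| ≤ B b) (x₀ x : ℝ) (n : ℕ) :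
    |u x - ∑ k ∈ Finset.range (n + 1),
        ((k.factorial : ℝ)⁻¹ * (x - x₀) ^ k) * iteratedDeriv k u x₀| ≤
      B (n + 1) * |x - x₀| ^ (n + 1) / (n.factorial : ℝ) := by
  rcases le_total x₀ x with h | h
  · exact gs_remainder_right u hu B hB x₀ x h n
  · set v : ℝ → ℝ := fun t => u (-t) with hv
    have hvC : ContDiff ℝ (⊤ : ℕ∞) v := hu.comp contDiff_neg
    have hvd : ∀ (b : ℕ) (t : ℝ), iteratedDeriv b v t = (-1 : ℝ) ^ b * iteratedDeriv b u (-t) := by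
      intro b t
      rw [hv, iteratedDeriv_comp_neg]
      simp [smul_eq_mul]
    have hvB : ∀ (b : ℕ) (t : ℝ), |iteratedDeriv b v t| ≤ B b := by
      intro b t
      rw [hvd]
      calc |(-1:ℝ) ^ b * iteratedDeriv b u (-t)| = |iteratedDeriv b u (-t)| := by
            simp [abs_mul]
        _ ≤ B b := hB b (-t)
    have h' := gs_remainder_right v hvC B hvB (-x₀) (-x) (neg_le_neg h) n
    have hval : v (-x) = u x := by simp [hv]
    have hterm : ∀ k ∈ Finset.range (n + 1),
        ((k.factorial : ℝ)⁻¹ * (-x - -x₀) ^ k) * iteratedDeriv k v (-x₀) =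
        ((k.factorial : ℝ)⁻¹ * (x - x₀) ^ k) * iteratedDeriv k u x₀ := by
      intro k _
      rw [hvd, neg_neg]
      have : (-x - -x₀) ^ k * (-1:ℝ) ^ k = (x - x₀) ^ k := by
        rw [← mul_pow]; congr 1; ring
      calc ((k.factorial : ℝ)⁻¹ * (-x - -x₀) ^ k) * ((-1:ℝ) ^ k * iteratedDeriv k u x₀)
          = (k.factorial : ℝ)⁻¹ * ((-x - -x₀) ^ k * (-1:ℝ) ^ k) * iteratedDeriv k u x₀ := by ring
        _ = ((k.factorial : ℝ)⁻¹ * (x - x₀) ^ k) * iteratedDeriv k u x₀ := by rw [this]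
    rw [hval, Finset.sum_congr rfl hterm] at h'
    have habs : |-x - -x₀| = |x - x₀| := by
      rw [show -x - -x₀ = -(x - x₀) by ring, abs_neg]
    rwa [habs] at h'

theorem gelfand_shilov_entire_extension (lam mu : ℝ) (hlam : 0 < lam) (hmu0 : 0 < mu)
    (hmu1 : mu < 1) (u : ℝ → ℝ) (hu : ContDiff ℝ (⊤ : ℕ∞) u) (A : ℝ) (hA : 0 < A)
    (hbound : ∀ (a b : ℕ) (x : ℝ),
      |x ^ a * iteratedDeriv b u x| ≤
        A ^ (a + b) * (Nat.factorial a : ℝ) ^ lam * (Nat.factorial b : ℝ) ^ mu) :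
    ∃ U : ℂ → ℂ, Differentiable ℂ U ∧ (∀ x : ℝ, U x = u x) ∧
      ∃ K > (0 : ℝ), ∀ x y : ℝ,
        Real.exp (lam / 2 * |x / A| ^ (1 / lam)) * ‖U (x + y * Complex.I)‖ ≤
          K * Real.exp (2 * (1 - mu) * |A * y| ^ (1 / (1 - mu))) := by
  set ν : ℝ := 1 - mu with hνdef
  have hν : 0 < ν := by rw [hνdef]; linarith
  set θ : ℝ := (2:ℝ) ^ (-ν) with hθdef
  have hθ0 : (0:ℝ) ≤ θ := Real.rpow_nonneg (by norm_num) _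
  have hθ1 : θ < 1 := Real.rpow_lt_one_of_one_lt_of_neg (by norm_num) (by linarith)
  -- uniform derivative bounds
  have hb0 : ∀ (b : ℕ) (t : ℝ), |iteratedDeriv b u t| ≤ A ^ b * (b.factorial : ℝ) ^ mu := by
    intro b t
    have h := hbound 0 b t
    simpa [Real.one_rpow] using h
  have hfacpos : ∀ n : ℕ, (0:ℝ) < (n.factorial : ℝ) := fun n => by
    exact_mod_cast n.factorial_pos
  have hfacid : ∀ n : ℕ, (n.factorial : ℝ) ^ (mu - 1) = (n.factorial : ℝ) ^ mu / (n.factorial:ℝ) := by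
    intro n
    rw [Real.rpow_sub (hfacpos n), Real.rpow_one]
  -- termwise geometric bound
  have hterm : ∀ q : ℝ, 0 ≤ q → ∀ n : ℕ,
      q ^ n * (n.factorial : ℝ) ^ (mu - 1) ≤ θ ^ n * Real.exp (2 * ν * q ^ (1/ν)) := by
    intro q hq n
    have h := gs_aux_exp_bound ν q hν hq n
    rw [hθdef, show (mu - 1 : ℝ) = -ν from by rw [hνdef]; ring]
    exact h
  -- coefficient-term norm bound
  have habs : ∀ (w : ℝ) (n : ℕ) (d : ℝ), |d| ≤ A ^ n * (n.factorial : ℝ) ^ mu →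
      (n.factorial : ℝ)⁻¹ * |w| ^ n * |d| ≤ (A * |w|) ^ n * (n.factorial : ℝ) ^ (mu - 1) := by
    intro w n d hd
    have h1 : (n.factorial : ℝ)⁻¹ * |w| ^ n * |d| ≤
        (n.factorial : ℝ)⁻¹ * |w| ^ n * (A ^ n * (n.factorial : ℝ) ^ mu) := by
      refine mul_le_mul_of_nonneg_left hd (by positivity)
    refine h1.trans_eq ?_
    rw [hfacid, mul_pow]
    field_simp
  -- the power series at 0
  set p : FormalMultilinearSeries ℂ ℂ ℂ := fun n =>
    ContinuousMultilinearMap.mkPiRing ℂ (Fin n)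
      ((n.factorial : ℂ)⁻¹ * Complex.ofReal (iteratedDeriv n u 0)) with hp
  have hpnorm : ∀ n, ‖p n‖ = (n.factorial : ℝ)⁻¹ * |iteratedDeriv n u 0| := by
    intro n
    rw [hp]
    rw [ContinuousMultilinearMap.norm_mkPiRing, norm_mul, norm_inv]
    simp [Complex.norm_natCast, Complex.norm_real, Real.norm_eq_abs]
  have hrad : p.radius = ⊤ := by
    apply p.radius_eq_top_of_summable_norm
    intro r
    refine Summable.of_nonneg_of_le
      (fun n => mul_nonneg (norm_nonneg _) (pow_nonneg r.coe_nonneg n))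
      (fun n => ?_)
      (((summable_geometric_of_lt_one hθ0 hθ1).mul_right
        (Real.exp (2 * ν * (A * (r:ℝ)) ^ (1/ν)))))
    have h2 := habs (r:ℝ) n (iteratedDeriv n u 0) (hb0 n 0)
    rw [_root_.abs_of_nonneg r.coe_nonneg] at h2
    have h1 : ‖p n‖ * (r:ℝ) ^ n ≤ (A * (r:ℝ)) ^ n * (n.factorial : ℝ) ^ (mu - 1) := by
      rw [hpnorm]
      calc (n.factorial:ℝ)⁻¹ * |iteratedDeriv n u 0| * (r:ℝ) ^ n
          = (n.factorial:ℝ)⁻¹ * (r:ℝ) ^ n * |iteratedDeriv n u 0| := by ring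
        _ ≤ _ := h2
    exact h1.trans (hterm (A * (r:ℝ)) (by positivity) n)
  set U : ℂ → ℂ := fun z => p.sum z with hU
  have hball : ∀ z : ℂ, z ∈ EMetric.ball (0:ℂ) p.radius := by
    intro z; rw [hrad]; exact edist_lt_top z 0
  have hfp : HasFPowerSeriesOnBall U p 0 p.radius :=
    p.hasFPowerSeriesOnBall (by rw [hrad]; exact ENNReal.zero_lt_top)
  have hUdiff : Differentiable ℂ U := fun z =>
    (hfp.analyticAt_of_mem (by simpa [hrad] using (enorm_lt_top : ‖z‖ₑ < ⊤))).differentiableAt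
  -- sums
  have hUsum : ∀ z : ℂ, HasSum
      (fun n => ((n.factorial : ℂ)⁻¹ * Complex.ofReal (iteratedDeriv n u 0)) * z ^ n) (U z) := by
    intro z
    have h := p.hasSum (hball z)
    have heq : (fun n => p n (fun _ => z)) =
        fun n => ((n.factorial : ℂ)⁻¹ * Complex.ofReal (iteratedDeriv n u 0)) * z ^ n := by
      funext n
      rw [hp]
      rw [ContinuousMultilinearMap.mkPiRing_apply]
      simp [smul_eq_mul, mul_comm]
    exact heq ▸ h
  -- real Taylor sums converge to u
  have hreal : ∀ t : ℝ, HasSum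
      (fun n => ((n.factorial : ℝ)⁻¹ * t ^ n) * iteratedDeriv n u 0) (u t) := by
    intro t
    have habs' : ∀ n : ℕ, ‖((n.factorial : ℝ)⁻¹ * t ^ n) * iteratedDeriv n u 0‖ ≤
        θ ^ n * Real.exp (2 * ν * (A * |t|) ^ (1/ν)) := by
      intro n
      have h1 : ‖((n.factorial : ℝ)⁻¹ * t ^ n) * iteratedDeriv n u 0‖ =
          (n.factorial : ℝ)⁻¹ * |t| ^ n * |iteratedDeriv n u 0| := by
        rw [Real.norm_eq_abs, _root_.abs_mul, _root_.abs_mul, _root_.abs_inv, _root_.abs_pow, Nat.abs_cast]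
      rw [h1]
      exact (habs t n _ (hb0 n 0)).trans (hterm (A * |t|) (by positivity) n)
    have hsummable : Summable (fun n => ((n.factorial : ℝ)⁻¹ * t ^ n) * iteratedDeriv n u 0) := by
      refine Summable.of_norm ?_
      refine Summable.of_nonneg_of_le (fun n => norm_nonneg _) habs'
        ((summable_geometric_of_lt_one hθ0 hθ1).mul_right
          (Real.exp (2 * ν * (A * |t|) ^ (1/ν))))
    rw [hsummable.hasSum_iff_tendsto_nat]
    set S : ℕ → ℝ := fun m => ∑ k ∈ Finset.range m,
      ((k.factorial : ℝ)⁻¹ * t ^ k) * iteratedDeriv k u 0 with hS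
    set q : ℝ := A * |t| with hq
    have hq0 : 0 ≤ q := by positivity
    set E : ℝ := Real.exp (2 * ν * q ^ (1/ν)) with hE
    have hE0 : 0 ≤ E := (Real.exp_pos _).le
    have hRb : ∀ n : ℕ, |u t - S (n+1)| ≤ ((n:ℝ)+1) * (q * E) * θ ^ n := by
      intro n
      have h := gs_remainder u hu (fun b => A ^ b * (b.factorial : ℝ) ^ mu) hb0 0 t n
      simp only [sub_zero] at h
      refine h.trans ?_
      have hn1 : (0:ℝ) ≤ (n:ℝ) + 1 := by positivity
      have hfs : ((n+1).factorial : ℝ) ^ mu ≤ ((n:ℝ)+1) * (n.factorial : ℝ) ^ mu := by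
        have h1 : ((n+1).factorial : ℝ) = ((n:ℝ)+1) * (n.factorial : ℝ) := by
          rw [Nat.factorial_succ]; push_cast; ring
        rw [h1, Real.mul_rpow (by positivity) (hfacpos n).le]
        refine mul_le_mul_of_nonneg_right ?_ (Real.rpow_nonneg (hfacpos n).le _)
        calc ((n:ℝ)+1) ^ mu ≤ ((n:ℝ)+1) ^ (1:ℝ) :=
              Real.rpow_le_rpow_of_exponent_le
                (by linarith [Nat.cast_nonneg (α := ℝ) n]) (by linarith)
          _ = (n:ℝ)+1 := Real.rpow_one _
      calc A ^ (n+1) * ((n+1).factorial : ℝ) ^ mu * |t| ^ (n+1) / (n.factorial : ℝ)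
          ≤ A ^ (n+1) * (((n:ℝ)+1) * (n.factorial : ℝ) ^ mu) * |t| ^ (n+1) / (n.factorial : ℝ) := by
            gcongr
        _ = ((n:ℝ)+1) * (q * (q ^ n * (n.factorial : ℝ) ^ (mu - 1))) := by
            rw [hfacid, hq, mul_pow]
            field_simp
            ring
        _ ≤ ((n:ℝ)+1) * (q * (θ ^ n * E)) := by
            refine mul_le_mul_of_nonneg_left (mul_le_mul_of_nonneg_left ?_ hq0) hn1
            exact hterm q hq0 n
        _ = ((n:ℝ)+1) * (q * E) * θ ^ n := by ring
    have hgeo : Summable (fun n : ℕ => ((n:ℝ)+1) * (q * E) * θ ^ n) := by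
      have h1 : Summable (fun n : ℕ => (n:ℝ) * θ ^ n) := by
        have := summable_pow_mul_geometric_of_norm_lt_one 1
          (by rwa [Real.norm_eq_abs, _root_.abs_of_nonneg hθ0] : ‖θ‖ < 1)
        simpa using this
      have h2 : Summable (fun n : ℕ => θ ^ n) := summable_geometric_of_lt_one hθ0 hθ1
      have h3 := (h1.add h2).mul_left (q * E)
      refine h3.congr fun n => ?_
      ring
    have htend0 : Filter.Tendsto (fun n : ℕ => ((n:ℝ)+1) * (q * E) * θ ^ n)
        Filter.atTop (nhds 0) := hgeo.tendsto_atTop_zero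
    have hto : Filter.Tendsto (fun n : ℕ => S (n+1) - u t) Filter.atTop (nhds 0) := by
      refine squeeze_zero_norm (fun n => ?_) htend0
      rw [Real.norm_eq_abs, _root_.abs_sub_comm]
      exact hRb n
    have hto2 : Filter.Tendsto (fun n : ℕ => S (n+1)) Filter.atTop (nhds (u t)) := by
      have := hto.add_const (u t)
      simpa using this
    exact (Filter.tendsto_add_atTop_iff_nat 1).mp hto2
  -- U equals u on the reals
  have hUval : ∀ t : ℝ, U t = Complex.ofReal (u t) := by
    intro t
    have h1 := hUsum (t : ℂ)
    have h2 : HasSum (fun n => ((n.factorial : ℂ)⁻¹ * Complex.ofReal (iteratedDeriv n u 0))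
        * (t:ℂ) ^ n) (Complex.ofReal (u t)) := by
      have h3 := (hreal t).mapL Complex.ofRealCLM
      refine h3.congr_fun fun n => ?_
      simp only [Complex.ofRealCLM_apply]
      push_cast
      ring
    exact h1.unique h2
  -- all iterated derivatives of U are entire
  have hUderdiff : ∀ n : ℕ, Differentiable ℂ (iteratedDeriv n U) := by
    intro n
    induction n with
    | zero => simpa [iteratedDeriv_zero] using hUdiff
    | succ n ih =>
      rw [iteratedDeriv_succ]
      exact (analyticOnNhd_univ_iff_differentiable.mp
        ((analyticOnNhd_univ_iff_differentiable.mpr ih).deriv))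
  have hudiffn : ∀ n : ℕ, Differentiable ℝ (iteratedDeriv n u) := by
    intro n
    exact hu.differentiable_iteratedDeriv n (by exact_mod_cast ENat.coe_lt_top n)
  -- iterated derivatives of U on ℝ agree with those of u
  have hmatch : ∀ (n : ℕ) (t : ℝ), iteratedDeriv n U t = Complex.ofReal (iteratedDeriv n u t) := by
    intro n
    induction n with
    | zero => simpa [iteratedDeriv_zero] using hUval
    | succ n ih =>
      intro t
      rw [iteratedDeriv_succ, iteratedDeriv_succ]
      have h1 : HasDerivAt (iteratedDeriv n U) (deriv (iteratedDeriv n U) t) ((t:ℝ) : ℂ) :=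
        (hUderdiff n ((t:ℝ):ℂ)).hasDerivAt
      have h2 := h1.comp_ofReal
      have heq : (fun s : ℝ => iteratedDeriv n U (s : ℂ)) =
          fun s : ℝ => Complex.ofReal (iteratedDeriv n u s) := funext fun s => ih s
      rw [heq] at h2
      have h3 : HasDerivAt (fun s : ℝ => Complex.ofReal (iteratedDeriv n u s))
          (Complex.ofReal (deriv (iteratedDeriv n u) t)) t :=
        ((hudiffn n t).hasDerivAt).ofReal_comp
      exact h2.unique h3
  refine ⟨U, hUdiff, fun t => hUval t, ?_⟩
  refine ⟨(2:ℝ) ^ lam * (1 - θ)⁻¹,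
    mul_pos (Real.rpow_pos_of_pos (by norm_num) lam) (inv_pos.mpr (by linarith)), fun x y => ?_⟩
  -- expansion of U around x
  have hS := Complex.hasSum_taylorSeries_of_entire hUdiff (x : ℂ) (x + y * Complex.I)
  have hSpt : ((x:ℂ) + y * Complex.I) - (x:ℂ) = y * Complex.I := by ring
  rw [hSpt] at hS
  have hS' : HasSum (fun n : ℕ => (n.factorial : ℂ)⁻¹ • (y * Complex.I) ^ n •
      Complex.ofReal (iteratedDeriv n u x)) (U (x + y * Complex.I)) := by
    refine hS.congr_fun fun n => ?_
    rw [hmatch n x]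
  set g : ℕ → ℝ := fun n => (n.factorial : ℝ)⁻¹ * |y| ^ n * |iteratedDeriv n u x| with hg
  have hnormterm : ∀ n : ℕ, ‖(n.factorial : ℂ)⁻¹ • (y * Complex.I) ^ n •
      Complex.ofReal (iteratedDeriv n u x)‖ = g n := by
    intro n
    rw [norm_smul, norm_smul, norm_pow, norm_inv, norm_mul]
    simp only [Complex.norm_natCast, Complex.norm_I, mul_one,
      Complex.norm_real, Real.norm_eq_abs, hg]
    ring
  set E : ℝ := Real.exp (2 * ν * (A * |y|) ^ (1/ν)) with hE
  have hgbound : ∀ n : ℕ, g n ≤ θ ^ n * E := by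
    intro n
    exact (habs y n _ (hb0 n x)).trans (hterm (A * |y|) (by positivity) n)
  have hgsummable : Summable g := by
    refine Summable.of_nonneg_of_le (fun n => by positivity) hgbound
      ((summable_geometric_of_lt_one hθ0 hθ1).mul_right E)
  have hnormsummable : Summable (fun n : ℕ => ‖(n.factorial : ℂ)⁻¹ • (y * Complex.I) ^ n •
      Complex.ofReal (iteratedDeriv n u x)‖) := by
    refine hgsummable.congr fun n => (hnormterm n).symm
  have hUnorm : ‖U (x + y * Complex.I)‖ ≤ ∑' n, g n := by
    rw [← hS'.tsum_eq]
    refine (norm_tsum_le_tsum_norm hnormsummable).trans_eq ?_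
    exact tsum_congr hnormterm
  -- choice of a
  set s : ℝ := |x / A| ^ (1/lam) with hs
  have hs0 : 0 ≤ s := Real.rpow_nonneg (abs_nonneg _) _
  obtain ⟨a, ha⟩ := gs_aux_max s hs0
  have hslam : s ^ lam = |x / A| := by
    rw [hs, one_div]; exact Real.rpow_inv_rpow (abs_nonneg _) hlam.ne'
  have hexpphi : Real.exp (lam / 2 * |x / A| ^ (1/lam)) ≤
      (2:ℝ) ^ lam * |x / A| ^ a / ((a.factorial : ℝ)) ^ lam := by
    have h1 : lam / 2 * |x / A| ^ (1/lam) = s / 2 * lam := by rw [hs]; ring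
    rw [h1, Real.exp_mul]
    calc Real.exp (s / 2) ^ lam ≤ (2 * (s ^ a / (a.factorial : ℝ))) ^ lam :=
          Real.rpow_le_rpow (Real.exp_pos _).le ha hlam.le
      _ = (2:ℝ) ^ lam * (s ^ a) ^ lam / ((a.factorial : ℝ)) ^ lam := by
          rw [Real.mul_rpow (by norm_num) (by positivity),
            Real.div_rpow (by positivity) (hfacpos a).le, mul_div_assoc]
      _ = (2:ℝ) ^ lam * |x / A| ^ a / ((a.factorial : ℝ)) ^ lam := by
          congr 2
          rw [← Real.rpow_natCast s a, ← Real.rpow_mul hs0, mul_comm,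
            Real.rpow_mul hs0, Real.rpow_natCast, hslam]
  -- core termwise estimate
  have hcore : ∀ n : ℕ, (2:ℝ) ^ lam * |x / A| ^ a / ((a.factorial : ℝ)) ^ lam * g n ≤
      (2:ℝ) ^ lam * (θ ^ n * E) := by
    intro n
    have hb := hbound a n x
    have hxa : |x / A| ^ a * |iteratedDeriv n u x| ≤
        A ^ n * ((a.factorial : ℝ)) ^ lam * ((n.factorial : ℝ)) ^ mu := by
      have h1 : |x / A| ^ a = |x| ^ a / A ^ a := by
        rw [_root_.abs_div, _root_.abs_of_pos hA, div_pow]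
      rw [h1, div_mul_eq_mul_div, div_le_iff₀ (by positivity)]
      calc |x| ^ a * |iteratedDeriv n u x| = |x ^ a * iteratedDeriv n u x| := by
            rw [_root_.abs_mul, _root_.abs_pow]
        _ ≤ A ^ (a + n) * ((a.factorial : ℝ)) ^ lam * ((n.factorial : ℝ)) ^ mu := hb
        _ = A ^ n * ((a.factorial : ℝ)) ^ lam * ((n.factorial : ℝ)) ^ mu * A ^ a := by
            rw [pow_add]; ring
    have e1 : (2:ℝ) ^ lam * |x / A| ^ a / ((a.factorial : ℝ)) ^ lam * g n =
        (|x / A| ^ a * |iteratedDeriv n u x|) *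
          ((2:ℝ) ^ lam * (n.factorial : ℝ)⁻¹ * |y| ^ n / ((a.factorial : ℝ)) ^ lam) := by
      rw [hg]; ring
    have e2 : (2:ℝ) ^ lam * ((A * |y|) ^ n * (n.factorial : ℝ) ^ (mu - 1)) =
        (A ^ n * ((a.factorial : ℝ)) ^ lam * ((n.factorial : ℝ)) ^ mu) *
          ((2:ℝ) ^ lam * (n.factorial : ℝ)⁻¹ * |y| ^ n / ((a.factorial : ℝ)) ^ lam) := by
      rw [hfacid, mul_pow]
      have hfa : ((a.factorial : ℝ)) ^ lam ≠ 0 := (Real.rpow_pos_of_pos (hfacpos a) _).ne'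
      field_simp
    calc (2:ℝ) ^ lam * |x / A| ^ a / ((a.factorial : ℝ)) ^ lam * g n
        ≤ (2:ℝ) ^ lam * ((A * |y|) ^ n * (n.factorial : ℝ) ^ (mu - 1)) := by
          rw [e1, e2]
          exact mul_le_mul_of_nonneg_right hxa (by positivity)
      _ ≤ (2:ℝ) ^ lam * (θ ^ n * E) := by
          refine mul_le_mul_of_nonneg_left ?_ (by positivity)
          exact hterm (A * |y|) (by positivity) n
  -- put everything together
  have habsA : |A * y| = A * |y| := by rw [_root_.abs_mul, _root_.abs_of_pos hA]
  have hsum1 : Summable (fun n : ℕ => (2:ℝ) ^ lam * |x / A| ^ a / ((a.factorial : ℝ)) ^ lam * g n) :=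
    hgsummable.mul_left _
  have hsum2 : Summable (fun n : ℕ => (2:ℝ) ^ lam * (θ ^ n * E)) :=
    (((summable_geometric_of_lt_one hθ0 hθ1).mul_right E).mul_left _)
  calc Real.exp (lam / 2 * |x / A| ^ (1/lam)) * ‖U (x + y * Complex.I)‖
      ≤ Real.exp (lam / 2 * |x / A| ^ (1/lam)) * ∑' n, g n := by
        refine mul_le_mul_of_nonneg_left ?_ (Real.exp_pos _).le
        exact hUnorm
    _ ≤ ((2:ℝ) ^ lam * |x / A| ^ a / ((a.factorial : ℝ)) ^ lam) * ∑' n, g n := by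
        refine mul_le_mul_of_nonneg_right hexpphi ?_
        exact tsum_nonneg fun n => by positivity
    _ = ∑' n, (2:ℝ) ^ lam * |x / A| ^ a / ((a.factorial : ℝ)) ^ lam * g n := by
        rw [← tsum_mul_left]
    _ ≤ ∑' n, (2:ℝ) ^ lam * (θ ^ n * E) := hsum1.tsum_le_tsum hcore hsum2
    _ = (2:ℝ) ^ lam * ((1 - θ)⁻¹ * E) := by
        rw [tsum_mul_left, tsum_mul_right, tsum_geometric_of_lt_one hθ0 hθ1]
    _ = (2:ℝ) ^ lam * (1 - θ)⁻¹ * Real.exp (2 * (1 - mu) * |A * y| ^ (1 / (1 - mu))) := by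
        rw [hE, habsA, hνdef]
        ring
end
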